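/- arXiv:2105.13014 — 4 statements merged into one kernel-verified Lean document; each statement's English description precedes it below -/
import Mathlib

section
/- Let E be a real Hilbert space, T > 0, N a positive integer, τ := T/N, and t_k := kτ for k = 0,1,…,N. Let x : ℝ → E be continuous on [0,T] and differentiable on [0,T] with derivative x′ such that s ↦ ‖x′(s)‖² is integrable on [0,T]. Then Σ_{k=1}^N ∫_{t_{k−1}}^{t_k} ‖x(t) − x(t_k)‖² dt ≤ (τ²/2) · ∫_0^T ‖x′(s)‖² ds. -/
open MeasureTheory Set

/-!
On a step `[a, b]`, `‖x t - x b‖ ≤ ∫ₜᵇ ‖x'‖`, and Cauchy–Schwarz (Jensen for the square) turns this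
into `‖x t - x b‖² ≤ (b - t) ∫ₐᵇ ‖x'‖²`. Integrating the weight `b - t` over the step gives
`(b - a)² / 2 = τ² / 2`, and the steps tile `[0, T]`.
-/
theorem sq_integral_le_measureReal_univ_mul_integral_sq {α : Type*} [MeasurableSpace α]
    {μ : Measure α} [IsFiniteMeasure μ] {f : α → ℝ} (hf : MemLp f 2 μ) :
    (∫ a, f a ∂μ) ^ 2 ≤ μ.real univ * ∫ a, f a ^ 2 ∂μ := by
  rcases eq_zero_or_neZero μ with rfl | hμ
  · simp
  have hc : 0 < μ.real univ := measureReal_univ_pos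
  have hjensen := (even_two.convexOn_pow (𝕜 := ℝ)).map_average_le
    (continuous_pow 2).continuousOn isClosed_univ (ae_of_all _ fun _ => mem_univ _)
    (hf.integrable one_le_two) hf.integrable_sq
  rw [average_eq, average_eq, smul_eq_mul, smul_eq_mul, mul_pow, inv_pow, ← div_eq_inv_mul,
    ← div_eq_inv_mul, div_le_div_iff₀ (by positivity) hc] at hjensen
  exact (mul_le_mul_iff_left₀ hc).1 (by linarith)

theorem memLp_two_norm_of_integrable_norm_sq {α F : Type*} [MeasurableSpace α]
    [NormedAddCommGroup F] {μ : Measure α} {f : α → F}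
    (h : Integrable (fun a => ‖f a‖ ^ 2) μ) : MemLp (fun a => ‖f a‖) 2 μ := by
  have hmeas : AEStronglyMeasurable (fun a => ‖f a‖) μ := by
    simpa only [Real.sqrt_sq (norm_nonneg _)] using
      Real.continuous_sqrt.comp_aestronglyMeasurable h.aestronglyMeasurable
  exact (memLp_two_iff_integrable_sq hmeas).2 h

section Interval

variable {E : Type*} [NormedAddCommGroup E] [NormedSpace ℝ E] {f f' : ℝ → E} {a b : ℝ}

theorem norm_sub_sq_le_mul_integral_norm_deriv_sq (hab : a ≤ b)
    (hfc : ContinuousOn f (Icc a b)) (hf' : ∀ t ∈ Ioo a b, HasDerivAt f (f' t) t)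
    (hf'2 : IntegrableOn (fun t => ‖f' t‖ ^ 2) (Icc a b)) :
    ‖f b - f a‖ ^ 2 ≤ (b - a) * ∫ t in a..b, ‖f' t‖ ^ 2 := by
  have hL2 : MemLp (fun t => ‖f' t‖) 2 (volume.restrict (Ioc a b)) :=
    memLp_two_norm_of_integrable_norm_sq (hf'2.mono_set Ioc_subset_Icc_self)
  have hdisp : ‖f b - f a‖ ≤ ∫ t in a..b, ‖f' t‖ :=
    norm_sub_le_integral_of_norm_deriv_le_of_le hab hfc
      (fun t ht => (hf' t ht).differentiableAt.differentiableWithinAt)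
      (ae_of_all _ fun t ht => (congrArg norm (hf' t ht).deriv).le)
      ((intervalIntegrable_iff_integrableOn_Ioc_of_le hab).2 (hL2.integrable one_le_two))
  calc ‖f b - f a‖ ^ 2 ≤ (∫ t in a..b, ‖f' t‖) ^ 2 := by gcongr
    _ ≤ (b - a) * ∫ t in a..b, ‖f' t‖ ^ 2 := by
      simpa [intervalIntegral.integral_of_le hab, hab] using
        sq_integral_le_measureReal_univ_mul_integral_sq hL2

theorem integral_norm_sub_right_sq_le (hab : a ≤ b)
    (hfc : ContinuousOn f (Icc a b)) (hf' : ∀ t ∈ Ioo a b, HasDerivAt f (f' t) t)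
    (hf'2 : IntegrableOn (fun t => ‖f' t‖ ^ 2) (Icc a b)) :
    ∫ t in a..b, ‖f t - f b‖ ^ 2 ≤ (b - a) ^ 2 / 2 * ∫ t in a..b, ‖f' t‖ ^ 2 := by
  set C := ∫ t in a..b, ‖f' t‖ ^ 2
  have hpointwise : ∀ t ∈ Icc a b, ‖f t - f b‖ ^ 2 ≤ (b - t) * C := by
    intro t ⟨hat, htb⟩
    have hsub : Icc t b ⊆ Icc a b := Icc_subset_Icc_left hat
    calc ‖f t - f b‖ ^ 2 ≤ (b - t) * ∫ s in t..b, ‖f' s‖ ^ 2 := by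
          rw [norm_sub_rev]
          exact norm_sub_sq_le_mul_integral_norm_deriv_sq htb (hfc.mono hsub)
            (fun s hs => hf' s (Ioo_subset_Ioo_left hat hs)) (hf'2.mono_set hsub)
      _ ≤ (b - t) * C := by
          gcongr
          exact intervalIntegral.integral_mono_interval hat htb le_rfl
            (ae_of_all _ fun s => by positivity)
            ((intervalIntegrable_iff_integrableOn_Icc_of_le hab).2 hf'2)
  calc ∫ t in a..b, ‖f t - f b‖ ^ 2 ≤ ∫ t in a..b, (b - t) * C :=
        intervalIntegral.integral_mono_on hab
          (((hfc.sub continuousOn_const).norm.pow 2).intervalIntegrable_of_Icc hab)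
          ((by fun_prop : Continuous fun t => (b - t) * C).intervalIntegrable a b) hpointwise
    _ = (b - a) ^ 2 / 2 * C := by
        simp [intervalIntegral.integral_mul_const,
          intervalIntegral.integral_comp_sub_left (fun t => t)]

end Interval

theorem sum_integral_uniform_partition (g : ℝ → ℝ) {τ : ℝ} (hτ : 0 ≤ τ) (N : ℕ)
    (hg : IntegrableOn g (Icc 0 (N * τ))) :
    ∑ k ∈ Finset.Icc 1 N, ∫ t in ((k : ℝ) - 1) * τ..(k : ℝ) * τ, g t =
      ∫ t in (0 : ℝ)..N * τ, g t := by
  have hpieces : ∀ k < N, IntervalIntegrable g volume (k * τ) ((k + 1 : ℕ) * τ) := by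
    intro k hk
    have hk' : ((k + 1 : ℕ) : ℝ) ≤ N := by exact_mod_cast hk
    refine (intervalIntegrable_iff_integrableOn_Icc_of_le ?_).2 (hg.mono_set ?_)
    · gcongr; simp
    · exact Icc_subset_Icc (by positivity) (by gcongr)
  have htelescope := intervalIntegral.sum_integral_adjacent_intervals hpieces
  rw [Nat.cast_zero, zero_mul] at htelescope
  rw [← htelescope, ← Finset.Ico_add_one_right_eq_Icc, Finset.sum_Ico_eq_sum_range]
  simp [add_comm]

theorem piecewise_constant_interpolant_l2_bound_general
    {E : Type*} [NormedAddCommGroup E] [InnerProductSpace ℝ E]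
    (T : ℝ) (hT : 0 < T) (N : ℕ) (hN : 0 < N) (τ : ℝ) (hτ : τ = T / N)
    (x x' : ℝ → E)
    (hxc : ContinuousOn x (Icc 0 T))
    (hx' : ∀ t ∈ Icc (0 : ℝ) T, HasDerivWithinAt x (x' t) (Icc 0 T) t)
    (hint : IntegrableOn (fun s => ‖x' s‖ ^ 2) (Icc 0 T)) :
    ∑ k ∈ Finset.Icc 1 N,
        ∫ t in ((((k : ℝ) - 1)) * τ)..((k : ℝ) * τ), ‖x t - x ((k : ℝ) * τ)‖ ^ 2 ≤
      τ ^ 2 / 2 * ∫ s in (0 : ℝ)..T, ‖x' s‖ ^ 2 := by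
  have hτ0 : 0 ≤ τ := hτ ▸ by positivity
  have hNτ : (N : ℝ) * τ = T := by rw [hτ]; field_simp
  have hderiv : ∀ t ∈ Ioo 0 T, HasDerivAt x (x' t) t := fun t ht =>
    (hx' t (Ioo_subset_Icc_self ht)).hasDerivAt (Icc_mem_nhds ht.1 ht.2)
  calc _ ≤ ∑ k ∈ Finset.Icc 1 N,
          τ ^ 2 / 2 * ∫ s in ((k : ℝ) - 1) * τ..(k : ℝ) * τ, ‖x' s‖ ^ 2 := by
        refine Finset.sum_le_sum fun k hk => ?_
        obtain ⟨hk1, hkN⟩ := Finset.mem_Icc.1 hk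
        have hleft : 0 ≤ ((k : ℝ) - 1) * τ :=
          mul_nonneg (sub_nonneg.2 (Nat.one_le_cast.2 hk1)) hτ0
        have hright : (k : ℝ) * τ ≤ T := hNτ ▸ by gcongr
        have hsub := Icc_subset_Icc hleft hright
        have hpiece := integral_norm_sub_right_sq_le (by linarith) (hxc.mono hsub)
          (fun t ht => hderiv t (Ioo_subset_Ioo hleft hright ht)) (hint.mono_set hsub)
        rwa [show (k : ℝ) * τ - ((k : ℝ) - 1) * τ = τ by ring] at hpiece
    _ = τ ^ 2 / 2 * ∫ s in (0 : ℝ)..T, ‖x' s‖ ^ 2 := by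
        rw [← Finset.mul_sum, sum_integral_uniform_partition _ hτ0 N (hNτ ▸ hint), hNτ]

/-- Lemma 3.3 (ii), L²-in-time bound for the piecewise constant interpolant. -/
theorem piecewise_constant_interpolant_l2_bound
    {E : Type*} [NormedAddCommGroup E] [InnerProductSpace ℝ E] [CompleteSpace E]
    (T : ℝ) (hT : 0 < T) (N : ℕ) (hN : 0 < N) (τ : ℝ) (hτ : τ = T / N)
    (x x' : ℝ → E)
    (hxc : ContinuousOn x (Icc 0 T))
    (hx' : ∀ t ∈ Icc (0 : ℝ) T, HasDerivWithinAt x (x' t) (Icc 0 T) t)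
    (hint : IntegrableOn (fun s => ‖x' s‖ ^ 2) (Icc 0 T)) :
    ∑ k ∈ Finset.Icc 1 N,
        ∫ t in ((((k : ℝ) - 1)) * τ)..((k : ℝ) * τ), ‖x t - x ((k : ℝ) * τ)‖ ^ 2 ≤
      τ ^ 2 / 2 * ∫ s in (0 : ℝ)..T, ‖x' s‖ ^ 2 :=
  piecewise_constant_interpolant_l2_bound_general T hT N hN τ hτ x x' hxc hx' hint
end

section
/- Let E be a real Banach space, T > 0, N a positive integer, τ := T/N, and t_k := kτ for k = 0,1,…,N. Let x : ℝ → E be twice continuously differentiable on [0,T], with first derivative x′ and second derivative x″. Then Σ_{k=1}^N τ · ‖x′(t_k) − (x(t_k) − x(t_{k−1}))/τ‖² ≤ (τ²/3) · ∫_0^T ‖x″(s)‖² ds. -/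
open MeasureTheory Set

/-!
On a cell `[a, b]` of length `τ`, the fundamental theorem of calculus applied to
`s ↦ (s - a) • x' s - x s` gives `τ • x' b - (x b - x a) = ∫ s in a..b, (s - a) • x'' s`.
Cauchy–Schwarz against the weight `s - a`, whose square integrates to `τ ^ 3 / 3`, bounds the
squared norm of this remainder by `τ ^ 3 / 3 * ∫ s in a..b, ‖x'' s‖ ^ 2`; dividing by `τ` and
summing over the cells of the uniform grid gives the claim.
-/

theorem sq_integral_norm_mul_norm_le {α E F : Type*} [MeasurableSpace α] {μ : Measure α}
    [NormedAddCommGroup E] [NormedAddCommGroup F] {f : α → E} {g : α → F}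
    (hf : MemLp f 2 μ) (hg : MemLp g 2 μ) :
    (∫ a, ‖f a‖ * ‖g a‖ ∂μ) ^ 2 ≤ (∫ a, ‖f a‖ ^ 2 ∂μ) * ∫ a, ‖g a‖ ^ 2 ∂μ := by
  have hf' : MemLp (fun a => ‖f a‖) (ENNReal.ofReal 2) μ := by simpa using hf.norm
  have hg' : MemLp (fun a => ‖g a‖) (ENNReal.ofReal 2) μ := by simpa using hg.norm
  have holder := integral_mul_norm_le_Lp_mul_Lq Real.HolderConjugate.two_two hf' hg'
  simp only [norm_norm, Real.rpow_two] at holder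
  calc (∫ a, ‖f a‖ * ‖g a‖ ∂μ) ^ 2
      ≤ ((∫ a, ‖f a‖ ^ 2 ∂μ) ^ (1 / 2 : ℝ) * (∫ a, ‖g a‖ ^ 2 ∂μ) ^ (1 / 2 : ℝ)) ^ 2 :=
        pow_le_pow_left₀ (integral_nonneg fun _ => by positivity) holder 2
    _ = (∫ a, ‖f a‖ ^ 2 ∂μ) * ∫ a, ‖g a‖ ^ 2 ∂μ := by
        rw [mul_pow, ← Real.sqrt_eq_rpow, ← Real.sqrt_eq_rpow,
          Real.sq_sqrt (integral_nonneg fun _ => by positivity),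
          Real.sq_sqrt (integral_nonneg fun _ => by positivity)]

theorem ContinuousOn.memLp_two_of_isCompact {X E : Type*} [TopologicalSpace X] [T2Space X]
    [MeasurableSpace X] [OpensMeasurableSpace X] {μ : Measure X} [IsFiniteMeasureOnCompacts μ]
    [NormedAddCommGroup E] {s : Set X} {g : X → E} (hs : IsCompact s) (hg : ContinuousOn g s) :
    MemLp g 2 (μ.restrict s) :=
  (memLp_two_iff_integrable_sq_norm (hg.integrableOn_compact hs).1).2
    ((hg.norm.pow 2).integrableOn_compact hs)

section
variable {E : Type*} [NormedAddCommGroup E] [NormedSpace ℝ E]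

theorem sum_Icc_integral_eq_integral {g : ℝ → E} {τ : ℝ} (hτ : 0 ≤ τ) (N : ℕ)
    (hg : IntervalIntegrable g volume 0 (N * τ)) :
    ∑ k ∈ Finset.Icc 1 N, ∫ s in ((k : ℝ) - 1) * τ..k * τ, g s = ∫ s in 0..N * τ, g s := by
  induction N with
  | zero => simp
  | succ N ih =>
    have hN : (0 : ℝ) ≤ N * τ := by positivity
    have hN1 : (N : ℝ) * τ ≤ (N + 1) * τ := by linarith
    rw [Nat.cast_succ] at hg
    have hleft := hg.mono_set (uIcc_subset_uIcc left_mem_uIcc (mem_uIcc_of_le hN hN1))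
    have hright := hg.mono_set (uIcc_subset_uIcc (mem_uIcc_of_le hN hN1) right_mem_uIcc)
    rw [Finset.sum_Icc_succ_top (by omega), ih hleft, Nat.cast_succ, add_sub_cancel_right,
      intervalIntegral.integral_add_adjacent_intervals hleft hright]

variable [CompleteSpace E] {f f' f'' : ℝ → E} {a b : ℝ}

theorem integral_sub_smul_eq_sub_smul_deriv_sub (hab : a ≤ b)
    (hf : ∀ t ∈ Icc a b, HasDerivWithinAt f (f' t) (Icc a b) t)
    (hf' : ∀ t ∈ Icc a b, HasDerivWithinAt f' (f'' t) (Icc a b) t)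
    (hf'' : ContinuousOn f'' (Icc a b)) :
    ∫ s in a..b, (s - a) • f'' s = (b - a) • f' b - (f b - f a) := by
  have hcont : ContinuousOn (fun s => (s - a) • f' s - f s) (Icc a b) :=
    ((continuousOn_id.sub continuousOn_const).smul fun t ht => (hf' t ht).continuousWithinAt).sub
      fun t ht => (hf t ht).continuousWithinAt
  have hderiv : ∀ s ∈ Ioo a b,
      HasDerivWithinAt (fun s => (s - a) • f' s - f s) ((s - a) • f'' s) (Ioi s) s := by
    intro s hs
    have hnhds : Icc a b ∈ nhds s := Icc_mem_nhds hs.1 hs.2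
    have h := (((hasDerivAt_id' s).sub_const a).fun_smul
      ((hf' s (Ioo_subset_Icc_self hs)).hasDerivAt hnhds)).fun_sub
      ((hf s (Ioo_subset_Icc_self hs)).hasDerivAt hnhds)
    simpa using h.hasDerivWithinAt
  have hint : IntervalIntegrable (fun s => (s - a) • f'' s) volume a b :=
    ((continuousOn_id.sub continuousOn_const).smul hf'').intervalIntegrable_of_Icc hab
  rw [intervalIntegral.integral_eq_sub_of_hasDeriv_right_of_le hab hcont hderiv hint]
  simp only [sub_self, zero_smul, zero_sub, sub_neg_eq_add]
  abel

theorem norm_sub_smul_deriv_sub_sq_le (hab : a ≤ b)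
    (hf : ∀ t ∈ Icc a b, HasDerivWithinAt f (f' t) (Icc a b) t)
    (hf' : ∀ t ∈ Icc a b, HasDerivWithinAt f' (f'' t) (Icc a b) t)
    (hf'' : ContinuousOn f'' (Icc a b)) :
    ‖(b - a) • f' b - (f b - f a)‖ ^ 2 ≤ (b - a) ^ 3 / 3 * ∫ s in a..b, ‖f'' s‖ ^ 2 := by
  have hweight : ∫ s in a..b, ‖s - a‖ ^ 2 = (b - a) ^ 3 / 3 := by
    simp only [Real.norm_eq_abs, sq_abs]
    rw [intervalIntegral.integral_comp_sub_right (· ^ 2), integral_pow]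
    ring
  have hCS := sq_integral_norm_mul_norm_le
    ((continuous_sub_right a).continuousOn.memLp_two_of_isCompact
      (μ := volume) isCompact_Icc) (hf''.memLp_two_of_isCompact isCompact_Icc)
  simp only [integral_Icc_eq_integral_Ioc, ← intervalIntegral.integral_of_le hab] at hCS
  rw [← integral_sub_smul_eq_sub_smul_deriv_sub hab hf hf' hf'', ← hweight]
  calc ‖∫ s in a..b, (s - a) • f'' s‖ ^ 2
      ≤ (∫ s in a..b, ‖s - a‖ * ‖f'' s‖) ^ 2 := by
        gcongr
        simpa only [norm_smul] using
          intervalIntegral.norm_integral_le_integral_norm (f := fun s => (s - a) • f'' s) hab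
    _ ≤ _ := hCS

theorem mul_norm_deriv_sub_slope_sq_le (hab : a ≤ b)
    (hf : ∀ t ∈ Icc a b, HasDerivWithinAt f (f' t) (Icc a b) t)
    (hf' : ∀ t ∈ Icc a b, HasDerivWithinAt f' (f'' t) (Icc a b) t)
    (hf'' : ContinuousOn f'' (Icc a b)) :
    (b - a) * ‖f' b - slope f a b‖ ^ 2 ≤ (b - a) ^ 2 / 3 * ∫ s in a..b, ‖f'' s‖ ^ 2 := by
  rcases hab.eq_or_lt with rfl | hlt
  · simp
  have hba : 0 < b - a := sub_pos.mpr hlt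
  have hslope : f' b - slope f a b = (b - a)⁻¹ • ((b - a) • f' b - (f b - f a)) := by
    rw [slope_def_module, smul_sub _ ((b - a) • f' b), inv_smul_smul₀ hba.ne']
  calc (b - a) * ‖f' b - slope f a b‖ ^ 2
      = (b - a)⁻¹ * ‖(b - a) • f' b - (f b - f a)‖ ^ 2 := by
        rw [hslope, norm_smul, mul_pow, Real.norm_of_nonneg (inv_nonneg.mpr hba.le)]
        field_simp
    _ ≤ (b - a)⁻¹ * ((b - a) ^ 3 / 3 * ∫ s in a..b, ‖f'' s‖ ^ 2) := by
        gcongr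
        exact norm_sub_smul_deriv_sub_sq_le hab hf hf' hf''
    _ = (b - a) ^ 2 / 3 * ∫ s in a..b, ‖f'' s‖ ^ 2 := by
        field_simp
end

theorem consistency_error_l2_bound_general
    {E : Type*} [NormedAddCommGroup E] [NormedSpace ℝ E] [CompleteSpace E]
    (T : ℝ) (hT : 0 < T) (N : ℕ) (hN : 0 < N) (τ : ℝ) (hτ : τ = T / N)
    (x x' x'' : ℝ → E)
    (hx' : ∀ t ∈ Icc (0 : ℝ) T, HasDerivWithinAt x (x' t) (Icc 0 T) t)
    (hx'' : ∀ t ∈ Icc (0 : ℝ) T, HasDerivWithinAt x' (x'' t) (Icc 0 T) t)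
    (hc'' : ContinuousOn x'' (Icc 0 T)) :
    ∑ k ∈ Finset.Icc 1 N,
        τ * ‖x' ((k : ℝ) * τ) - τ⁻¹ • (x ((k : ℝ) * τ) - x (((k : ℝ) - 1) * τ))‖ ^ 2 ≤
      τ ^ 2 / 3 * ∫ s in (0 : ℝ)..T, ‖x'' s‖ ^ 2 := by
  have hτ0 : 0 ≤ τ := hτ ▸ by positivity
  have hNτ : (N : ℝ) * τ = T := by rw [hτ]; field_simp
  calc _ ≤ ∑ k ∈ Finset.Icc 1 N, τ ^ 2 / 3 * ∫ s in ((k : ℝ) - 1) * τ..k * τ, ‖x'' s‖ ^ 2 := by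
        refine Finset.sum_le_sum fun k hk => ?_
        obtain ⟨hk1, hkN⟩ := Finset.mem_Icc.mp hk
        have hsub : Icc (((k : ℝ) - 1) * τ) (k * τ) ⊆ Icc 0 T := by
          rw [← hNτ]
          have hk1' : (1 : ℝ) ≤ k := by exact_mod_cast hk1
          exact Icc_subset_Icc (mul_nonneg (by linarith) hτ0) (by gcongr)
        have h := mul_norm_deriv_sub_slope_sq_le (by linarith)
          (fun t ht => (hx' t (hsub ht)).mono hsub) (fun t ht => (hx'' t (hsub ht)).mono hsub)
          (hc''.mono hsub)
        rwa [slope_def_module, show (k : ℝ) * τ - (k - 1) * τ = τ by ring] at h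
    _ = τ ^ 2 / 3 * ∫ s in (0 : ℝ)..T, ‖x'' s‖ ^ 2 := by
        have hint : IntervalIntegrable (fun s => ‖x'' s‖ ^ 2) volume 0 (N * τ) :=
          hNτ ▸ (hc''.norm.pow 2).intervalIntegrable_of_Icc hT.le
        rw [← Finset.mul_sum, sum_Icc_integral_eq_integral hτ0 N hint, hNτ]

/-- Lemma 3.2 (i): L² bound for the consistency error of the backward
difference quotient. -/
theorem consistency_error_l2_bound
    {E : Type*} [NormedAddCommGroup E] [NormedSpace ℝ E] [CompleteSpace E]
    (T : ℝ) (hT : 0 < T) (N : ℕ) (hN : 0 < N) (τ : ℝ) (hτ : τ = T / N)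
    (x x' x'' : ℝ → E)
    (hx' : ∀ t ∈ Icc (0 : ℝ) T, HasDerivWithinAt x (x' t) (Icc 0 T) t)
    (hx'' : ∀ t ∈ Icc (0 : ℝ) T, HasDerivWithinAt x' (x'' t) (Icc 0 T) t)
    (hc' : ContinuousOn x' (Icc 0 T))
    (hc'' : ContinuousOn x'' (Icc 0 T)) :
    ∑ k ∈ Finset.Icc 1 N,
        τ * ‖x' ((k : ℝ) * τ) - τ⁻¹ • (x ((k : ℝ) * τ) - x (((k : ℝ) - 1) * τ))‖ ^ 2 ≤
      τ ^ 2 / 3 * ∫ s in (0 : ℝ)..T, ‖x'' s‖ ^ 2 :=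
  consistency_error_l2_bound_general T hT N hN τ hτ x x' x'' hx' hx'' hc''
end

section
/- Let E be a real Banach space, T > 0, N a positive integer with N ≥ 2, τ := T/N, and t_k := kτ for k = 0,1,…,N. Let x : ℝ → E be three times continuously differentiable on [0,T], with derivatives x′, x″ and x‴. For k = 1,2,…,N define R_k := x′(t_k) − (x(t_k) − x(t_{k−1}))/τ. Then for every k = 2,3,…,N, ‖(R_k − R_{k−1})/τ‖ ≤ √(τ/3) · (∫_{t_{k−2}}^{t_k} ‖x‴(s)‖² ds)^{1/2}. -/
/-!
Integrating by parts against the weight `u - t_{k-1}` gives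
`R_k = τ⁻¹ ∫_{t_{k-1}}^{t_k} (u - t_{k-1}) x''(u) du`; shifting the integral for `R_{k-1}` by `τ`,
`R_k - R_{k-1} = τ⁻¹ ∫_{t_{k-1}}^{t_k} (u - t_{k-1}) (x''(u) - x''(u - τ)) du`.
Each `x''(u) - x''(u - τ)` is the integral of `x'''` over an interval of length `τ` inside
`[t_{k-2}, t_k]`, so by Cauchy–Schwarz its norm is at most `√τ ‖x'''‖_{L²(t_{k-2}, t_k)}`.
The weight integrates to `τ² / 2`, which gives the estimate with the constant `√τ / 2 ≤ √(τ / 3)`.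
-/

open MeasureTheory Set

theorem forall_hasDerivWithinAt_mono {𝕜 F : Type*} [NontriviallyNormedField 𝕜]
    [NormedAddCommGroup F] [NormedSpace 𝕜 F] {f f' : 𝕜 → F} {s u : Set 𝕜}
    (h : ∀ t ∈ s, HasDerivWithinAt f (f' t) s t) (hus : u ⊆ s) :
    ∀ t ∈ u, HasDerivWithinAt f (f' t) u t :=
  fun t ht => (h t (hus ht)).mono hus

theorem intervalIntegral.integral_norm_le_sqrt_mul_sqrt {E : Type*} [NormedAddCommGroup E]
    {f : ℝ → E} {p q : ℝ} (hpq : p ≤ q) (hf : ContinuousOn f (Icc p q)) :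
    ∫ s in p..q, ‖f s‖ ≤ √(q - p) * √(∫ s in p..q, ‖f s‖ ^ 2) := by
  rw [intervalIntegral.integral_of_le hpq, intervalIntegral.integral_of_le hpq]
  have hf_sq : MemLp f (ENNReal.ofReal 2) (volume.restrict (Ioc p q)) := by
    rw [ENNReal.ofReal_ofNat, memLp_two_iff_integrable_sq_norm
      ((hf.mono Ioc_subset_Icc_self).aestronglyMeasurable measurableSet_Ioc)]
    exact ((hf.norm.pow 2).integrableOn_compact isCompact_Icc).mono_set Ioc_subset_Icc_self
  have h_holder := integral_mul_norm_le_Lp_mul_Lq Real.HolderConjugate.two_two hf_sq.norm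
    (memLp_const (1 : ℝ))
  simp only [norm_norm, norm_one, mul_one, Real.one_rpow, setIntegral_const, smul_eq_mul,
    Real.volume_real_Ioc_of_le hpq] at h_holder
  rw [Real.sqrt_eq_rpow, Real.sqrt_eq_rpow, mul_comm]
  simpa only [Real.rpow_two] using h_holder

theorem intervalIntegral.norm_integral_sub_smul_le {E : Type*} [NormedAddCommGroup E]
    [NormedSpace ℝ E] {g : ℝ → E} {p q C : ℝ} (hpq : p ≤ q) (hg : ∀ u ∈ Ioc p q, ‖g u‖ ≤ C) :
    ‖∫ u in p..q, (u - p) • g u‖ ≤ C * (q - p) ^ 2 / 2 := by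
  have hbound : ∀ u ∈ Ioc p q, ‖(u - p) • g u‖ ≤ (u - p) * C := fun u hu => by
    rw [norm_smul, Real.norm_of_nonneg (sub_nonneg.2 hu.1.le)]
    exact mul_le_mul_of_nonneg_left (hg u hu) (sub_nonneg.2 hu.1.le)
  calc ‖∫ u in p..q, (u - p) • g u‖ ≤ ∫ u in p..q, (u - p) * C :=
        intervalIntegral.norm_integral_le_of_norm_le hpq (.of_forall hbound)
          ((by fun_prop : Continuous fun u : ℝ => (u - p) * C).intervalIntegrable _ _)
    _ = C * (q - p) ^ 2 / 2 := by
        rw [intervalIntegral.integral_mul_const, intervalIntegral.integral_comp_sub_right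
          (fun u => u), integral_id]
        ring

section FundamentalTheorem

variable {E : Type*} [NormedAddCommGroup E] [NormedSpace ℝ E] [CompleteSpace E] {p q : ℝ}

theorem intervalIntegral.integral_eq_sub_of_hasDerivWithinAt_Icc {g g' : ℝ → E} (hpq : p ≤ q)
    (hg : ∀ t ∈ Icc p q, HasDerivWithinAt g (g' t) (Icc p q) t)
    (hg' : IntervalIntegrable g' volume p q) :
    ∫ t in p..q, g' t = g q - g p :=
  intervalIntegral.integral_eq_sub_of_hasDeriv_right_of_le hpq (HasDerivWithinAt.continuousOn hg)
    (fun t ht => ((hg t (Ioo_subset_Icc_self ht)).hasDerivAt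
      (Icc_mem_nhds ht.1 ht.2)).hasDerivWithinAt) hg'

theorem norm_sub_le_sqrt_mul_sqrt_integral_norm_deriv_sq {g g' : ℝ → E} (hpq : p ≤ q)
    (hg : ∀ t ∈ Icc p q, HasDerivWithinAt g (g' t) (Icc p q) t)
    (hg' : ContinuousOn g' (Icc p q)) :
    ‖g q - g p‖ ≤ √(q - p) * √(∫ s in p..q, ‖g' s‖ ^ 2) := by
  rw [← intervalIntegral.integral_eq_sub_of_hasDerivWithinAt_Icc hpq hg
    (hg'.intervalIntegrable_of_Icc hpq)]
  exact (intervalIntegral.norm_integral_le_integral_norm hpq).trans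
    (intervalIntegral.integral_norm_le_sqrt_mul_sqrt hpq hg')

/-- Taylor's formula at `q` with integral remainder. -/
theorem intervalIntegral.integral_sub_smul_deriv2 {x x' x'' : ℝ → E} (hpq : p ≤ q)
    (hx : ∀ t ∈ Icc p q, HasDerivWithinAt x (x' t) (Icc p q) t)
    (hx' : ∀ t ∈ Icc p q, HasDerivWithinAt x' (x'' t) (Icc p q) t)
    (hx'' : ContinuousOn x'' (Icc p q)) :
    ∫ u in p..q, (u - p) • x'' u = (q - p) • x' q - (x q - x p) := by
  have hF : ∀ t ∈ Icc p q, HasDerivWithinAt (fun u => (u - p) • x' u - x u)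
      ((t - p) • x'' t) (Icc p q) t := fun t ht =>
    ((((hasDerivWithinAt_id t _).sub_const p).smul (hx' t ht)).sub (hx t ht)).congr_deriv
      (by simp)
  rw [intervalIntegral.integral_eq_sub_of_hasDerivWithinAt_Icc hpq hF
    (((continuousOn_id.sub continuousOn_const).smul hx'').intervalIntegrable_of_Icc hpq)]
  simp only [sub_self, zero_smul, zero_sub]
  abel

end FundamentalTheorem

section BackwardDifference

variable {E : Type*} [NormedAddCommGroup E] [NormedSpace ℝ E] [CompleteSpace E]
  {x x' x'' x''' : ℝ → E} {τ t : ℝ}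

noncomputable def backwardDifferenceError (x x' : ℝ → E) (τ t : ℝ) : E :=
  x' t - τ⁻¹ • (x t - x (t - τ))

theorem backwardDifferenceError_eq_integral (hτ : 0 < τ)
    (hx : ∀ s ∈ Icc (t - τ) t, HasDerivWithinAt x (x' s) (Icc (t - τ) t) s)
    (hx' : ∀ s ∈ Icc (t - τ) t, HasDerivWithinAt x' (x'' s) (Icc (t - τ) t) s)
    (hx'' : ContinuousOn x'' (Icc (t - τ) t)) :
    backwardDifferenceError x x' τ t = τ⁻¹ • ∫ u in (t - τ)..t, (u - (t - τ)) • x'' u := by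
  rw [intervalIntegral.integral_sub_smul_deriv2 (by linarith) hx hx' hx'', sub_sub_cancel,
    smul_sub, inv_smul_smul₀ hτ.ne']
  rfl

theorem backwardDifferenceError_sub_eq_integral (hτ : 0 < τ)
    (hx : ∀ s ∈ Icc (t - 2 * τ) t, HasDerivWithinAt x (x' s) (Icc (t - 2 * τ) t) s)
    (hx' : ∀ s ∈ Icc (t - 2 * τ) t, HasDerivWithinAt x' (x'' s) (Icc (t - 2 * τ) t) s)
    (hx'' : ContinuousOn x'' (Icc (t - 2 * τ) t)) :
    backwardDifferenceError x x' τ t - backwardDifferenceError x x' τ (t - τ) =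
      τ⁻¹ • ∫ u in (t - τ)..t, (u - (t - τ)) • (x'' u - x'' (u - τ)) := by
  have h_right : Icc (t - τ) t ⊆ Icc (t - 2 * τ) t := Icc_subset_Icc (by linarith) le_rfl
  have h_left : Icc (t - τ - τ) (t - τ) ⊆ Icc (t - 2 * τ) t :=
    Icc_subset_Icc (by linarith) (by linarith)
  have h_maps : MapsTo (· - τ) (Icc (t - τ) t) (Icc (t - 2 * τ) t) :=
    fun u hu => ⟨by linarith [hu.1], by linarith [hu.2]⟩
  have h_shift : ∫ u in (t - τ - τ)..(t - τ), (u - (t - τ - τ)) • x'' u =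
      ∫ u in (t - τ)..t, (u - (t - τ)) • x'' (u - τ) := by
    rw [← intervalIntegral.integral_comp_sub_right]
    simp only [sub_sub_sub_cancel_right]
  have h_weight : ContinuousOn (fun u : ℝ => u - (t - τ)) (Icc (t - τ) t) := by fun_prop
  have h_int : IntervalIntegrable (fun u => (u - (t - τ)) • x'' u) volume (t - τ) t :=
    (h_weight.smul (hx''.mono h_right)).intervalIntegrable_of_Icc (by linarith)
  have h_int_shift : IntervalIntegrable (fun u => (u - (t - τ)) • x'' (u - τ)) volume (t - τ) t :=
    (h_weight.smul (hx''.comp (by fun_prop) h_maps)).intervalIntegrable_of_Icc (by linarith)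
  rw [backwardDifferenceError_eq_integral hτ (forall_hasDerivWithinAt_mono hx h_right)
      (forall_hasDerivWithinAt_mono hx' h_right) (hx''.mono h_right),
    backwardDifferenceError_eq_integral hτ (forall_hasDerivWithinAt_mono hx h_left)
      (forall_hasDerivWithinAt_mono hx' h_left) (hx''.mono h_left),
    h_shift, ← smul_sub, ← intervalIntegral.integral_sub h_int h_int_shift]
  simp only [smul_sub]

theorem norm_backwardDifferenceError_sub_le (hτ : 0 < τ)
    (hx : ∀ s ∈ Icc (t - 2 * τ) t, HasDerivWithinAt x (x' s) (Icc (t - 2 * τ) t) s)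
    (hx' : ∀ s ∈ Icc (t - 2 * τ) t, HasDerivWithinAt x' (x'' s) (Icc (t - 2 * τ) t) s)
    (hx'' : ∀ s ∈ Icc (t - 2 * τ) t, HasDerivWithinAt x'' (x''' s) (Icc (t - 2 * τ) t) s)
    (hx''' : ContinuousOn x''' (Icc (t - 2 * τ) t)) :
    ‖τ⁻¹ • (backwardDifferenceError x x' τ t - backwardDifferenceError x x' τ (t - τ))‖ ≤
      √τ / 2 * √(∫ s in (t - 2 * τ)..t, ‖x''' s‖ ^ 2) := by
  set M := √(∫ s in (t - 2 * τ)..t, ‖x''' s‖ ^ 2)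
  have h_pointwise : ∀ u ∈ Ioc (t - τ) t, ‖x'' u - x'' (u - τ)‖ ≤ √τ * M := by
    intro u hu
    have h_sub : Icc (u - τ) u ⊆ Icc (t - 2 * τ) t :=
      Icc_subset_Icc (by linarith [hu.1]) hu.2
    calc ‖x'' u - x'' (u - τ)‖ ≤ √(u - (u - τ)) * √(∫ s in (u - τ)..u, ‖x''' s‖ ^ 2) :=
          norm_sub_le_sqrt_mul_sqrt_integral_norm_deriv_sq (by linarith)
            (forall_hasDerivWithinAt_mono hx'' h_sub) (hx'''.mono h_sub)
      _ ≤ √τ * M := by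
          rw [sub_sub_cancel]
          refine mul_le_mul_of_nonneg_left (Real.sqrt_le_sqrt ?_) (Real.sqrt_nonneg τ)
          exact intervalIntegral.integral_mono_interval (by linarith [hu.1]) (by linarith)
            hu.2 (.of_forall fun s => by positivity)
            ((hx'''.norm.pow 2).intervalIntegrable_of_Icc (by linarith))
  rw [backwardDifferenceError_sub_eq_integral hτ hx hx' (HasDerivWithinAt.continuousOn hx''),
    smul_smul, norm_smul, Real.norm_of_nonneg (by positivity)]
  calc τ⁻¹ * τ⁻¹ * ‖∫ u in (t - τ)..t, (u - (t - τ)) • (x'' u - x'' (u - τ))‖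
      ≤ τ⁻¹ * τ⁻¹ * (√τ * M * (t - (t - τ)) ^ 2 / 2) := by
        gcongr
        exact intervalIntegral.norm_integral_sub_smul_le (by linarith) h_pointwise
    _ = √τ / 2 * M := by
        rw [sub_sub_cancel]
        field_simp

end BackwardDifference

theorem consistency_error_difference_single_general
    {E : Type*} [NormedAddCommGroup E] [NormedSpace ℝ E] [CompleteSpace E]
    (T : ℝ) (hT : 0 < T) (N : ℕ) (τ : ℝ) (hτ : τ = T / N)
    (x x' x'' x''' : ℝ → E)
    (hx' : ∀ t ∈ Icc (0 : ℝ) T, HasDerivWithinAt x (x' t) (Icc 0 T) t)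
    (hx'' : ∀ t ∈ Icc (0 : ℝ) T, HasDerivWithinAt x' (x'' t) (Icc 0 T) t)
    (hx''' : ∀ t ∈ Icc (0 : ℝ) T, HasDerivWithinAt x'' (x''' t) (Icc 0 T) t)
    (hc''' : ContinuousOn x''' (Icc 0 T))
    (R : ℕ → E)
    (hR : ∀ k, 1 ≤ k → k ≤ N →
      R k = x' ((k : ℝ) * τ) - τ⁻¹ • (x ((k : ℝ) * τ) - x (((k : ℝ) - 1) * τ)))
    (k : ℕ) (hk2 : 2 ≤ k) (hkN : k ≤ N) :
    ‖τ⁻¹ • (R k - R (k - 1))‖ ≤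
      Real.sqrt (τ / 3) *
        Real.sqrt (∫ s in (((k : ℝ) - 2) * τ)..((k : ℝ) * τ), ‖x''' s‖ ^ 2) := by
  have hN : (0 : ℝ) < N := by exact_mod_cast (by omega : 0 < N)
  have hτ_pos : 0 < τ := hτ ▸ div_pos hT hN
  have hNτ : (N : ℝ) * τ = T := by rw [hτ]; field_simp
  have hk2' : (2 : ℝ) ≤ k := by exact_mod_cast hk2
  have hkN' : (k : ℝ) ≤ N := by exact_mod_cast hkN
  set t := (k : ℝ) * τ
  have h_dom : Icc (t - 2 * τ) t ⊆ Icc 0 T := Icc_subset_Icc (by nlinarith) (by nlinarith)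
  have hRk : R k = backwardDifferenceError x x' τ t := by
    rw [hR k (by omega) hkN, backwardDifferenceError, sub_one_mul]
  have hRk1 : R (k - 1) = backwardDifferenceError x x' τ (t - τ) := by
    rw [hR (k - 1) (by omega) (by omega), backwardDifferenceError, Nat.cast_sub (by omega),
      Nat.cast_one, sub_one_mul, sub_one_mul, sub_one_mul]
  rw [hRk, hRk1, show ((k : ℝ) - 2) * τ = t - 2 * τ by ring]
  calc _ ≤ √τ / 2 * √(∫ s in (t - 2 * τ)..t, ‖x''' s‖ ^ 2) :=
        norm_backwardDifferenceError_sub_le hτ_pos (forall_hasDerivWithinAt_mono hx' h_dom)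
          (forall_hasDerivWithinAt_mono hx'' h_dom) (forall_hasDerivWithinAt_mono hx''' h_dom)
          (hc'''.mono h_dom)
    _ ≤ √(τ / 3) * √(∫ s in (t - 2 * τ)..t, ‖x''' s‖ ^ 2) := by
        gcongr
        rw [Real.le_sqrt (by positivity) (by positivity), div_pow, Real.sq_sqrt hτ_pos.le]
        linarith

/-- Per-index estimate from the proof of Lemma 3.2 (ii). -/
theorem consistency_error_difference_single
    {E : Type*} [NormedAddCommGroup E] [NormedSpace ℝ E] [CompleteSpace E]
    (T : ℝ) (hT : 0 < T) (N : ℕ) (hN : 2 ≤ N) (τ : ℝ) (hτ : τ = T / N)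
    (x x' x'' x''' : ℝ → E)
    (hx' : ∀ t ∈ Icc (0 : ℝ) T, HasDerivWithinAt x (x' t) (Icc 0 T) t)
    (hx'' : ∀ t ∈ Icc (0 : ℝ) T, HasDerivWithinAt x' (x'' t) (Icc 0 T) t)
    (hx''' : ∀ t ∈ Icc (0 : ℝ) T, HasDerivWithinAt x'' (x''' t) (Icc 0 T) t)
    (hc' : ContinuousOn x' (Icc 0 T))
    (hc'' : ContinuousOn x'' (Icc 0 T))
    (hc''' : ContinuousOn x''' (Icc 0 T))
    (R : ℕ → E)
    (hR : ∀ k, 1 ≤ k → k ≤ N →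
      R k = x' ((k : ℝ) * τ) - τ⁻¹ • (x ((k : ℝ) * τ) - x (((k : ℝ) - 1) * τ)))
    (k : ℕ) (hk2 : 2 ≤ k) (hkN : k ≤ N) :
    ‖τ⁻¹ • (R k - R (k - 1))‖ ≤
      Real.sqrt (τ / 3) *
        Real.sqrt (∫ s in (((k : ℝ) - 2) * τ)..((k : ℝ) * τ), ‖x''' s‖ ^ 2) :=
  consistency_error_difference_single_general T hT N τ hτ x x' x'' x''' hx' hx'' hx''' hc''' R hR k
    hk2 hkN
end

section
/- Let E be a real Banach space, T > 0, N a positive integer with N ≥ 2, τ := T/N, and t_k := kτ for k = 0,1,…,N. Let x : ℝ → E be three times continuously differentiable on [0,T], with derivatives x′, x″ and x‴. For k = 1,2,…,N define R_k := x′(t_k) − (x(t_k) − x(t_{k−1}))/τ. Then Σ_{k=2}^N τ · ‖(R_k − R_{k−1})/τ‖² ≤ (2/3) · τ² · ∫_0^T ‖x‴(s)‖² ds. -/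
/-!
Integrating by parts twice, `τ • (R_k - R_{k-1})` is the integral of `x‴` against a Peano kernel
on `[t_{k-2}, t_k]`: it is `(s - t_{k-2})² / 2` on the first cell and `(τ² - (s - t_{k-1})²) / 2`
on the second. Cauchy–Schwarz on each cell, with `∫ kernel² = τ⁵/20` resp. `2τ⁵/15`, and
`(p + q)² ≤ 2p² + 2q²` bound the `k`-th term by `τ²/3` times the integral of `‖x‴‖²` over these
two cells. Each cell of the grid is counted at most twice in the sum, whence the factor `2/3`.
-/

open MeasureTheory Set

section

variable {E : Type*} [NormedAddCommGroup E]

theorem sq_integral_abs_mul_norm_le {α : Type*} [MeasurableSpace α] {μ : Measure α}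
    {w : α → ℝ} {f : α → E} (hw : MemLp w 2 μ) (hf : MemLp f 2 μ) :
    (∫ a, |w a| * ‖f a‖ ∂μ) ^ 2 ≤ (∫ a, w a ^ 2 ∂μ) * ∫ a, ‖f a‖ ^ 2 ∂μ := by
  have holder := integral_mul_norm_le_Lp_mul_Lq (f := w) (g := fun a => ‖f a‖)
    Real.HolderConjugate.two_two (by simpa using hw) (by simpa using hf.norm)
  simp only [Real.norm_eq_abs, abs_norm, sq_abs, Real.rpow_two] at holder
  calc _ ≤ ((∫ a, w a ^ 2 ∂μ) ^ (1 / 2 : ℝ) * (∫ a, ‖f a‖ ^ 2 ∂μ) ^ (1 / 2 : ℝ)) ^ 2 :=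
        pow_le_pow_left₀ (integral_nonneg fun a => by positivity) holder 2
    _ = _ := by
      rw [mul_pow, ← Real.sqrt_eq_rpow, ← Real.sqrt_eq_rpow,
        Real.sq_sqrt (integral_nonneg fun a => by positivity),
        Real.sq_sqrt (integral_nonneg fun a => by positivity)]

theorem ContinuousOn.memLp_two_restrict_Ioc {f : ℝ → E} {a b : ℝ}
    (hf : ContinuousOn f (Icc a b)) : MemLp f 2 (volume.restrict (Ioc a b)) := by
  rw [memLp_two_iff_integrable_sq_norm]
  · exact ((hf.norm.pow 2).integrableOn_Icc).mono_set Ioc_subset_Icc_self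
  · exact (hf.aestronglyMeasurable measurableSet_Icc).mono_set Ioc_subset_Icc_self

variable [NormedSpace ℝ E]

theorem norm_integral_smul_sq_le {α : Type*} [MeasurableSpace α] {μ : Measure α}
    {w : α → ℝ} {f : α → E} (hw : MemLp w 2 μ) (hf : MemLp f 2 μ) :
    ‖∫ a, w a • f a ∂μ‖ ^ 2 ≤ (∫ a, w a ^ 2 ∂μ) * ∫ a, ‖f a‖ ^ 2 ∂μ := by
  calc ‖∫ a, w a • f a ∂μ‖ ^ 2 ≤ (∫ a, |w a| * ‖f a‖ ∂μ) ^ 2 := by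
        gcongr
        simpa only [norm_smul, Real.norm_eq_abs] using
          norm_integral_le_integral_norm (fun a => w a • f a)
    _ ≤ _ := sq_integral_abs_mul_norm_le hw hf

theorem norm_intervalIntegral_smul_sq_le {a b : ℝ} (hab : a ≤ b) {w : ℝ → ℝ} {f : ℝ → E}
    (hw : ContinuousOn w (Icc a b)) (hf : ContinuousOn f (Icc a b)) :
    ‖∫ s in a..b, w s • f s‖ ^ 2 ≤ (∫ s in a..b, w s ^ 2) * ∫ s in a..b, ‖f s‖ ^ 2 := by
  simp only [intervalIntegral.integral_of_le hab]
  exact norm_integral_smul_sq_le hw.memLp_two_restrict_Ioc hf.memLp_two_restrict_Ioc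

noncomputable def consistencyError (x x' : ℝ → E) (h t : ℝ) : E :=
  x' t - h⁻¹ • (x t - x (t - h))

variable [CompleteSpace E] {f f' x x' x'' x''' : ℝ → E} {a b : ℝ}

theorem integral_eq_sub_of_hasDerivWithinAt_Icc (hab : a ≤ b)
    (hf : ∀ t ∈ Icc a b, HasDerivWithinAt f (f' t) (Icc a b) t)
    (hf' : IntervalIntegrable f' volume a b) :
    ∫ t in a..b, f' t = f b - f a :=
  intervalIntegral.integral_eq_sub_of_hasDerivAt_of_le hab
    (fun t ht => (hf t ht).continuousWithinAt)
    (fun t ht => (hf t (Ioo_subset_Icc_self ht)).hasDerivAt (Icc_mem_nhds ht.1 ht.2)) hf'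

theorem sub_smul_deriv_sub_sub_eq_integral (hab : a ≤ b)
    (hx : ∀ t ∈ Icc a b, HasDerivWithinAt x (x' t) (Icc a b) t)
    (hx' : ∀ t ∈ Icc a b, HasDerivWithinAt x' (x'' t) (Icc a b) t)
    (hx'' : IntervalIntegrable x'' volume a b) :
    (b - a) • x' b - (x b - x a) = ∫ s in a..b, (s - a) • x'' s := by
  have hx'_int : IntervalIntegrable x' volume a b :=
    (ContinuousOn.intervalIntegrable_of_Icc hab fun t ht => (hx' t ht).continuousWithinAt)
  rw [intervalIntegral.integral_smul_deriv_eq_deriv_smul_of_hasDerivWithinAt (u' := fun _ => 1)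
      (fun t _ => ((hasDerivAt_id' t).sub_const a).hasDerivWithinAt) (by rwa [uIcc_of_le hab])
      intervalIntegrable_const hx'']
  simp only [one_smul, sub_self, zero_smul, sub_zero]
  rw [integral_eq_sub_of_hasDerivWithinAt_Icc hab hx hx'_int]

theorem integral_sub_smul_eq_by_parts (c : ℝ) (hab : a ≤ b)
    (hx'' : ∀ t ∈ Icc a b, HasDerivWithinAt x'' (x''' t) (Icc a b) t)
    (hx''' : IntervalIntegrable x''' volume a b) :
    ∫ s in a..b, (s - a) • x'' s = (((b - a) ^ 2 - c) / 2) • x'' b + (c / 2) • x'' a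
      - ∫ s in a..b, (((s - a) ^ 2 - c) / 2) • x''' s := by
  have hkernel : ∀ t, HasDerivAt (fun s => ((s - a) ^ 2 - c) / 2) (t - a) t := fun t => by
    refine ((((hasDerivAt_id' t).sub_const a).fun_pow 2).sub_const c).div_const 2
      |>.congr_deriv ?_
    norm_num
  have hx''_int : IntervalIntegrable x'' volume a b :=
    ContinuousOn.intervalIntegrable_of_Icc hab fun t ht => (hx'' t ht).continuousWithinAt
  rw [intervalIntegral.integral_smul_deriv_eq_deriv_smul_of_hasDerivWithinAt
      (fun t _ => (hkernel t).hasDerivWithinAt) (by rwa [uIcc_of_le hab])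
      ((continuous_id.sub continuous_const).intervalIntegrable a b) hx''']
  have hua : ((a - a) ^ 2 - c) / 2 = -(c / 2) := by ring
  rw [hua, neg_smul]
  abel

theorem sub_smul_deriv_sub_sub_eq_integral_third_deriv {s : Set ℝ} (c : ℝ) (hab : a ≤ b)
    (hs : Icc a b ⊆ s)
    (hx : ∀ t ∈ s, HasDerivWithinAt x (x' t) s t)
    (hx' : ∀ t ∈ s, HasDerivWithinAt x' (x'' t) s t)
    (hx'' : ∀ t ∈ s, HasDerivWithinAt x'' (x''' t) s t)
    (hx''' : ContinuousOn x''' s) :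
    (b - a) • x' b - (x b - x a) = (((b - a) ^ 2 - c) / 2) • x'' b + (c / 2) • x'' a
      - ∫ u in a..b, (((u - a) ^ 2 - c) / 2) • x''' u := by
  have hx'''_int : IntervalIntegrable x''' volume a b :=
    (hx'''.mono hs).intervalIntegrable_of_Icc hab
  have hx''_int : IntervalIntegrable x'' volume a b :=
    ContinuousOn.intervalIntegrable_of_Icc hab fun t ht =>
      ((hx'' t (hs ht)).mono hs).continuousWithinAt
  rw [sub_smul_deriv_sub_sub_eq_integral hab (fun t ht => (hx t (hs ht)).mono hs)
      (fun t ht => (hx' t (hs ht)).mono hs) hx''_int,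
    integral_sub_smul_eq_by_parts c hab (fun t ht => (hx'' t (hs ht)).mono hs) hx'''_int]

theorem smul_consistencyError_sub_eq {s : Set ℝ} {h t : ℝ} (hh : 0 < h)
    (hs : Icc (t - h) (t + h) ⊆ s)
    (hx : ∀ t ∈ s, HasDerivWithinAt x (x' t) s t)
    (hx' : ∀ t ∈ s, HasDerivWithinAt x' (x'' t) s t)
    (hx'' : ∀ t ∈ s, HasDerivWithinAt x'' (x''' t) s t)
    (hx''' : ContinuousOn x''' s) :
    h • (consistencyError x x' h (t + h) - consistencyError x x' h t)
      = (∫ u in t - h..t, ((u - (t - h)) ^ 2 / 2) • x''' u)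
        - ∫ u in t..t + h, (((u - t) ^ 2 - h ^ 2) / 2) • x''' u := by
  -- With `c = 0` on `[t - h, t]` and `c = h²` on `[t, t + h]` both cells carry the same boundary
  -- term `(h² / 2) • x'' t`, which cancels in the difference.
  have hleft := sub_smul_deriv_sub_sub_eq_integral_third_deriv 0 (sub_le_self t hh.le)
    ((Icc_subset_Icc_right (le_add_of_nonneg_right hh.le)).trans hs) hx hx' hx'' hx'''
  have hright := sub_smul_deriv_sub_sub_eq_integral_third_deriv (h ^ 2)
    (le_add_of_nonneg_right hh.le) ((Icc_subset_Icc_left (sub_le_self t hh.le)).trans hs)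
    hx hx' hx'' hx'''
  simp only [sub_sub_cancel, add_sub_cancel_left, sub_zero, sub_self, zero_div, zero_smul,
    add_zero] at hleft hright
  simp only [consistencyError, add_sub_cancel_right, smul_sub, smul_inv_smul₀ hh.ne', hleft,
    hright]
  abel

theorem integral_sub_sq_div_two_sq (a b : ℝ) :
    ∫ u in a..b, ((u - a) ^ 2 / 2) ^ 2 = (b - a) ^ 5 / 20 := by
  rw [intervalIntegral.integral_comp_sub_right (fun u => (u ^ 2 / 2) ^ 2)]
  simp only [div_pow, ← pow_mul, intervalIntegral.integral_div, integral_pow]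
  ring

theorem integral_sub_sq_sub_sq_div_two_sq (a b : ℝ) :
    ∫ u in a..b, (((u - a) ^ 2 - (b - a) ^ 2) / 2) ^ 2 = 2 * (b - a) ^ 5 / 15 := by
  rw [intervalIntegral.integral_comp_sub_right (fun u => ((u ^ 2 - (b - a) ^ 2) / 2) ^ 2)]
  have hexpand : ∀ u : ℝ, ((u ^ 2 - (b - a) ^ 2) / 2) ^ 2
      = u ^ 4 / 4 - (b - a) ^ 2 / 2 * u ^ 2 + (b - a) ^ 4 / 4 := fun u => by ring
  simp only [hexpand]
  rw [intervalIntegral.integral_add, intervalIntegral.integral_sub,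
    intervalIntegral.integral_const_mul, intervalIntegral.integral_div, integral_pow, integral_pow,
    intervalIntegral.integral_const]
  · simp only [smul_eq_mul]
    ring
  all_goals exact Continuous.intervalIntegrable (by fun_prop) _ _

theorem consistencyError_sub_sq_le {s : Set ℝ} {h t : ℝ} (hh : 0 < h)
    (hs : Icc (t - h) (t + h) ⊆ s)
    (hx : ∀ t ∈ s, HasDerivWithinAt x (x' t) s t)
    (hx' : ∀ t ∈ s, HasDerivWithinAt x' (x'' t) s t)
    (hx'' : ∀ t ∈ s, HasDerivWithinAt x'' (x''' t) s t)
    (hx''' : ContinuousOn x''' s) :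
    h * ‖h⁻¹ • (consistencyError x x' h (t + h) - consistencyError x x' h t)‖ ^ 2
      ≤ h ^ 2 / 3 * ((∫ u in t - h..t, ‖x''' u‖ ^ 2) + ∫ u in t..t + h, ‖x''' u‖ ^ 2) := by
  have hl : t - h ≤ t := sub_le_self t hh.le
  have hr : t ≤ t + h := le_add_of_nonneg_right hh.le
  have hcl : ContinuousOn x''' (Icc (t - h) t) :=
    hx'''.mono ((Icc_subset_Icc_right hr).trans hs)
  have hcr : ContinuousOn x''' (Icc t (t + h)) :=
    hx'''.mono ((Icc_subset_Icc_left hl).trans hs)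
  set V₁ := ∫ u in t - h..t, ((u - (t - h)) ^ 2 / 2) • x''' u
  set V₂ := ∫ u in t..t + h, (((u - t) ^ 2 - h ^ 2) / 2) • x''' u
  set I₁ := ∫ u in t - h..t, ‖x''' u‖ ^ 2
  set I₂ := ∫ u in t..t + h, ‖x''' u‖ ^ 2
  have hV₁ : ‖V₁‖ ^ 2 ≤ h ^ 5 / 20 * I₁ := by
    have := norm_intervalIntegral_smul_sq_le hl
      (w := fun u => (u - (t - h)) ^ 2 / 2) (by fun_prop) hcl
    rwa [integral_sub_sq_div_two_sq, sub_sub_cancel] at this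
  have hV₂ : ‖V₂‖ ^ 2 ≤ 2 * h ^ 5 / 15 * I₂ := by
    have := norm_intervalIntegral_smul_sq_le hr
      (w := fun u => ((u - t) ^ 2 - (t + h - t) ^ 2) / 2) (by fun_prop) hcr
    rwa [integral_sub_sq_sub_sq_div_two_sq, add_sub_cancel_left] at this
  have hI₁ : 0 ≤ I₁ := intervalIntegral.integral_nonneg hl fun u _ => by positivity
  have hI₂ : 0 ≤ I₂ := intervalIntegral.integral_nonneg hr fun u _ => by positivity
  have hD := smul_consistencyError_sub_eq hh hs hx hx' hx'' hx'''
  set D := consistencyError x x' h (t + h) - consistencyError x x' h t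
  have hnorm : h * ‖D‖ ≤ ‖V₁‖ + ‖V₂‖ := by
    calc h * ‖D‖ = ‖V₁ - V₂‖ := by rw [← hD, norm_smul, Real.norm_of_nonneg hh.le]
      _ ≤ ‖V₁‖ + ‖V₂‖ := norm_sub_le _ _
  -- `(p + q)² ≤ 2p² + 2q²`, and `2 / 20, 2 * 2 / 15 ≤ 1 / 3`
  have hsq : h ^ 2 * ‖D‖ ^ 2 ≤ h ^ 5 / 3 * (I₁ + I₂) := by
    nlinarith [sq_nonneg (‖V₁‖ - ‖V₂‖), mul_nonneg hh.le (norm_nonneg D), pow_pos hh 5]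
  calc h * ‖h⁻¹ • D‖ ^ 2 = h ^ 2 * ‖D‖ ^ 2 / h ^ 3 := by
        rw [norm_smul, norm_inv, Real.norm_of_nonneg hh.le]
        field_simp
    _ ≤ h ^ 5 / 3 * (I₁ + I₂) / h ^ 3 := by gcongr
    _ = h ^ 2 / 3 * (I₁ + I₂) := by field_simp

theorem sum_range_pred_add_succ_le {c : ℕ → ℝ} (hc : ∀ j, 0 ≤ c j) (N : ℕ) :
    ∑ j ∈ Finset.range (N - 1), (c j + c (j + 1)) ≤ 2 * ∑ j ∈ Finset.range N, c j := by
  cases N with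
  | zero => simp
  | succ n =>
    rw [Nat.add_sub_cancel, Finset.sum_add_distrib]
    linarith [Finset.sum_range_succ c n, Finset.sum_range_succ' c n, hc 0, hc n]

theorem sum_range_consistencyError_sub_sq_le {τ : ℝ} (hτ : 0 < τ) (N : ℕ)
    (hx : ∀ t ∈ Icc 0 (N * τ), HasDerivWithinAt x (x' t) (Icc 0 (N * τ)) t)
    (hx' : ∀ t ∈ Icc 0 (N * τ), HasDerivWithinAt x' (x'' t) (Icc 0 (N * τ)) t)
    (hx'' : ∀ t ∈ Icc 0 (N * τ), HasDerivWithinAt x'' (x''' t) (Icc 0 (N * τ)) t)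
    (hx''' : ContinuousOn x''' (Icc 0 (N * τ))) :
    ∑ j ∈ Finset.range (N - 1), τ * ‖τ⁻¹ • (consistencyError x x' τ ((j + 2 : ℕ) * τ)
        - consistencyError x x' τ ((j + 1 : ℕ) * τ))‖ ^ 2
      ≤ 2 / 3 * τ ^ 2 * ∫ u in 0..N * τ, ‖x''' u‖ ^ 2 := by
  have hgrid : ∀ j ≤ N, (j : ℝ) * τ ∈ Icc 0 (N * τ) := fun j hj => ⟨by positivity, by gcongr⟩
  set c : ℕ → ℝ := fun j => ∫ u in (j : ℝ) * τ..((j + 1 : ℕ) : ℝ) * τ, ‖x''' u‖ ^ 2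
  have hcells : ∑ j ∈ Finset.range N, c j = ∫ u in 0..N * τ, ‖x''' u‖ ^ 2 := by
    rw [intervalIntegral.sum_integral_adjacent_intervals (a := fun j : ℕ => (j : ℝ) * τ)]
    · simp
    · intro j hj
      refine ((hx'''.norm.pow 2).intervalIntegrable_of_Icc (by positivity)).mono_set ?_
      rw [uIcc_of_le (show (0 : ℝ) ≤ N * τ by positivity)]
      exact uIcc_subset_Icc (hgrid j hj.le) (hgrid (j + 1) hj)
  have hterm : ∀ j ∈ Finset.range (N - 1),
      τ * ‖τ⁻¹ • (consistencyError x x' τ ((j + 2 : ℕ) * τ)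
        - consistencyError x x' τ ((j + 1 : ℕ) * τ))‖ ^ 2 ≤ τ ^ 2 / 3 * (c j + c (j + 1)) := by
    intro j hj
    have hjN : j + 2 ≤ N := by rw [Finset.mem_range] at hj; omega
    have hleft : ((j + 1 : ℕ) : ℝ) * τ - τ = j * τ := by push_cast; ring
    have hright : ((j + 1 : ℕ) : ℝ) * τ + τ = ((j + 2 : ℕ) : ℝ) * τ := by push_cast; ring
    have hkey := consistencyError_sub_sq_le (t := ((j + 1 : ℕ) : ℝ) * τ) hτ
      (by rw [hleft, hright]; exact Icc_subset_Icc (hgrid j (by omega)).1 (hgrid _ hjN).2)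
      hx hx' hx'' hx'''
    rwa [hleft, hright] at hkey
  calc _ ≤ ∑ j ∈ Finset.range (N - 1), τ ^ 2 / 3 * (c j + c (j + 1)) :=
        Finset.sum_le_sum hterm
    _ ≤ τ ^ 2 / 3 * (2 * ∑ j ∈ Finset.range N, c j) := by
        rw [← Finset.mul_sum]
        gcongr
        refine sum_range_pred_add_succ_le (fun j => ?_) N
        exact intervalIntegral.integral_nonneg (by gcongr; linarith) fun u _ => by positivity
    _ = 2 / 3 * τ ^ 2 * ∫ u in 0..N * τ, ‖x''' u‖ ^ 2 := by rw [hcells]; ring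

end

theorem consistency_error_difference_l2_bound_general
    {E : Type*} [NormedAddCommGroup E] [NormedSpace ℝ E] [CompleteSpace E]
    (T : ℝ) (hT : 0 < T) (N : ℕ) (hN : 2 ≤ N) (τ : ℝ) (hτ : τ = T / N)
    (x x' x'' x''' : ℝ → E)
    (hx' : ∀ t ∈ Icc (0 : ℝ) T, HasDerivWithinAt x (x' t) (Icc 0 T) t)
    (hx'' : ∀ t ∈ Icc (0 : ℝ) T, HasDerivWithinAt x' (x'' t) (Icc 0 T) t)
    (hx''' : ∀ t ∈ Icc (0 : ℝ) T, HasDerivWithinAt x'' (x''' t) (Icc 0 T) t)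
    (hc''' : ContinuousOn x''' (Icc 0 T))
    (R : ℕ → E)
    (hR : ∀ k, 1 ≤ k → k ≤ N →
      R k = x' ((k : ℝ) * τ) - τ⁻¹ • (x ((k : ℝ) * τ) - x (((k : ℝ) - 1) * τ))) :
    ∑ k ∈ Finset.Icc 2 N, τ * ‖τ⁻¹ • (R k - R (k - 1))‖ ^ 2 ≤
      2 / 3 * τ ^ 2 * ∫ s in (0 : ℝ)..T, ‖x''' s‖ ^ 2 := by
  have hτ0 : 0 < τ := by rw [hτ]; positivity
  have hNτ : (N : ℝ) * τ = T := by rw [hτ]; field_simp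
  have hR' : ∀ k, 1 ≤ k → k ≤ N → R k = consistencyError x x' τ (k * τ) := fun k hk hkN => by
    rw [hR k hk hkN, consistencyError, sub_one_mul]
  subst hNτ
  calc ∑ k ∈ Finset.Icc 2 N, τ * ‖τ⁻¹ • (R k - R (k - 1))‖ ^ 2
      = ∑ j ∈ Finset.range (N - 1), τ * ‖τ⁻¹ • (R (j + 2) - R (j + 1))‖ ^ 2 := by
        rw [Finset.range_eq_Ico]
        -- `Finset.Icc 2 N` is definitionally `Finset.Ico (0 + 2) (N - 1 + 2)`
        exact (Finset.sum_Ico_add' (fun k => τ * ‖τ⁻¹ • (R k - R (k - 1))‖ ^ 2) 0 (N - 1) 2).symm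
    _ = ∑ j ∈ Finset.range (N - 1), τ * ‖τ⁻¹ • (consistencyError x x' τ ((j + 2 : ℕ) * τ)
          - consistencyError x x' τ ((j + 1 : ℕ) * τ))‖ ^ 2 :=
        Finset.sum_congr rfl fun j hj => by
          rw [Finset.mem_range] at hj
          rw [hR' (j + 2) (by omega) (by omega), hR' (j + 1) (by omega) (by omega)]
    _ ≤ _ := sum_range_consistencyError_sub_sq_le hτ0 N hx' hx'' hx''' hc'''

/-- Lemma 3.2 (ii): L² bound for the backward difference of the consistency
error. -/
theorem consistency_error_difference_l2_bound
    {E : Type*} [NormedAddCommGroup E] [NormedSpace ℝ E] [CompleteSpace E]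
    (T : ℝ) (hT : 0 < T) (N : ℕ) (hN : 2 ≤ N) (τ : ℝ) (hτ : τ = T / N)
    (x x' x'' x''' : ℝ → E)
    (hx' : ∀ t ∈ Icc (0 : ℝ) T, HasDerivWithinAt x (x' t) (Icc 0 T) t)
    (hx'' : ∀ t ∈ Icc (0 : ℝ) T, HasDerivWithinAt x' (x'' t) (Icc 0 T) t)
    (hx''' : ∀ t ∈ Icc (0 : ℝ) T, HasDerivWithinAt x'' (x''' t) (Icc 0 T) t)
    (hc' : ContinuousOn x' (Icc 0 T))
    (hc'' : ContinuousOn x'' (Icc 0 T))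
    (hc''' : ContinuousOn x''' (Icc 0 T))
    (R : ℕ → E)
    (hR : ∀ k, 1 ≤ k → k ≤ N →
      R k = x' ((k : ℝ) * τ) - τ⁻¹ • (x ((k : ℝ) * τ) - x (((k : ℝ) - 1) * τ))) :
    ∑ k ∈ Finset.Icc 2 N, τ * ‖τ⁻¹ • (R k - R (k - 1))‖ ^ 2 ≤
      2 / 3 * τ ^ 2 * ∫ s in (0 : ℝ)..T, ‖x''' s‖ ^ 2 :=
  consistency_error_difference_l2_bound_general T hT N hN τ hτ x x' x'' x''' hx' hx'' hx''' hc''' R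
    hR
end
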